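/- arXiv:2501.12528 — 4 statements merged into one kernel-verified Lean document; each statement's English description precedes it below -/
import Mathlib

section
/- For all positive integers K, t, L with t + L ≤ K, set α = gcd(K, gcd(t, L)), F = ((t+L)/α) · C(K/α, (t+L)/α), Z = (t/α) · C(K/α − 1, (t+L)/α − 1), and S = ((K−t)/α) · C(K/α, (t+L)/α), where C(n,k) denotes the binomial coefficient. Then there exists an (L, K, F, Z, S) multiple-antenna placement delivery array. -/
/-- An `(L, K, F, Z, S)` multiple-antenna placement delivery array (MAPDA):
an `F × K` array with entries `*` (modeled by `none`) or integers in `[S]`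
(modeled by `some s`), satisfying conditions C1–C4. -/
def IsMAPDA (L K F Z S : ℕ) (P : Fin F → Fin K → Option (Fin S)) : Prop :=
  -- C1: the symbol `*` appears exactly `Z` times in each column
  (∀ k : Fin K, (Finset.univ.filter fun f : Fin F => P f k = none).card = Z) ∧
  -- C2: each integer `s ∈ [S]` appears at least once in the array
  (∀ s : Fin S, ∃ f k, P f k = some s) ∧
  -- C3: each integer appears at most once in each column
  (∀ (s : Fin S) (k : Fin K) (f₁ f₂ : Fin F),
      P f₁ k = some s → P f₂ k = some s → f₁ = f₂) ∧
  -- C4: for each `s` and each row `f` containing `s`, among the columns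
  -- containing `s`, at most `L` of them have an integer entry in row `f`
  (∀ (s : Fin S) (f : Fin F), (∃ k, P f k = some s) →
      (Finset.univ.filter fun k : Fin K =>
        (∃ f', P f' k = some s) ∧ (P f k).isSome = true).card ≤ L)

/-!
Write `q = K/α` and, by abuse of notation, `t`, `L` for `t/α`, `L/α`; put `m = t + L`.
The rows are the pairs `(T, i)` of an `m`-subset `T = {τ₀ < ⋯ < τ_{m-1}}` of `[q]` and a
residue `i` mod `m`. In a column `τ_p ∈ T` the entry is `*` if `i - p mod m < t` and the symbol
`(T, i - p)` otherwise, so each column has `t·C(q-1, m-1)` stars. In a column `k ∉ T` the entry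
is the symbol `(T - x + k, x)`, where `x = τ_{i-t}` is the pivot of the row. A symbol `(U, _)`
only occurs in columns of `U`, and the symbol `(U, x)` determines `T = U - k + x` and `i` from
its column `k`. Row `(T, i)` has exactly `L` integer entries in the columns of `T`; since the
pivot is one of them, it also has at most `L` in the columns of `T - x + k`. Repeating every
column `α` times multiplies this bound by `α` and gives the parameters of the theorem.
-/

open Finset

/-- `IsMAPDA` for arbitrary finite types of rows, columns and integer symbols. -/
structure IsMAPDAOn {R C V : Type*} [Fintype R] [Fintype C] [DecidableEq V]
    (L Z : ℕ) (P : R → C → Option V) : Prop where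
  card_filter_eq_none : ∀ k, #{f | P f k = none} = Z
  exists_eq_some : ∀ s, ∃ f k, P f k = some s
  eq_of_eq_some : ∀ s k f₁ f₂, P f₁ k = some s → P f₂ k = some s → f₁ = f₂
  card_filter_isSome_le : ∀ s f, (∃ k, P f k = some s) →
    #{k | (∃ f', P f' k = some s) ∧ (P f k).isSome} ≤ L

namespace IsMAPDAOn

theorem isMAPDA {L K F Z S : ℕ} {P : Fin F → Fin K → Option (Fin S)} (h : IsMAPDAOn L Z P) :
    IsMAPDA L K F Z S P :=
  ⟨h.1, h.2, h.3, fun s f hf => by convert h.4 s f hf⟩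

variable {R C V : Type*} [Fintype R] [Fintype C] [DecidableEq V] {L Z : ℕ}
  {P : R → C → Option V}

theorem map_equiv {R' C' V' : Type*} [Fintype R'] [Fintype C'] [DecidableEq V']
    (h : IsMAPDAOn L Z P) (eR : R ≃ R') (eC : C ≃ C') (eV : V ≃ V') :
    IsMAPDAOn L Z fun r c => (P (eR.symm r) (eC.symm c)).map eV where
  card_filter_eq_none k := by
    rw [← h.card_filter_eq_none (eC.symm k)]
    exact (card_equiv eR (by simp)).symm
  exists_eq_some s := by
    obtain ⟨f, k, hfk⟩ := h.exists_eq_some (eV.symm s)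
    exact ⟨eR f, eC k, by simp [hfk]⟩
  eq_of_eq_some s k f₁ f₂ h₁ h₂ := by
    simp only [Option.map_eq_some_iff, ← Equiv.eq_symm_apply, exists_eq_right] at h₁ h₂
    exact eR.symm.injective (h.eq_of_eq_some _ _ _ _ h₁ h₂)
  card_filter_isSome_le s f := by
    simp only [Option.map_eq_some_iff, ← Equiv.eq_symm_apply, exists_eq_right,
      Option.isSome_map]
    rintro ⟨k, hk⟩
    refine le_of_eq_of_le (card_equiv eC.symm fun k => ?_)
      (h.card_filter_isSome_le (eV.symm s) (eR.symm f) ⟨_, hk⟩)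
    simp [eR.symm.exists_congr_left]

theorem replicate (h : IsMAPDAOn L Z P) (A : Type*) [Fintype A] [Nonempty A] :
    IsMAPDAOn (Fintype.card A * L) Z fun r (c : A × C) => P r c.2 where
  card_filter_eq_none c := h.card_filter_eq_none c.2
  exists_eq_some s := by
    obtain ⟨f, k, hfk⟩ := h.exists_eq_some s
    exact ⟨f, (Classical.arbitrary A, k), hfk⟩
  eq_of_eq_some s c := h.eq_of_eq_some s c.2
  card_filter_isSome_le s f := by
    rintro ⟨c, hc⟩
    rw [← univ_product_univ, filter_product_right
      (fun k => (∃ f', P f' k = some s) ∧ (P f k).isSome), card_product, card_univ]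
    exact Nat.mul_le_mul_left _ (h.card_filter_isSome_le s f ⟨c.2, hc⟩)

theorem exists_isMAPDA [Fintype V] {K F S : ℕ} (h : IsMAPDAOn L Z P)
    (hR : Fintype.card R = F) (hC : Fintype.card C = K) (hV : Fintype.card V = S) :
    ∃ P' : Fin F → Fin K → Option (Fin S), IsMAPDA L K F Z S P' :=
  ⟨_, (h.map_equiv (Fintype.equivFinOfCardEq hR) (Fintype.equivFinOfCardEq hC)
    (Fintype.equivFinOfCardEq hV)).isMAPDA⟩

end IsMAPDAOn

theorem Fin.card_filter_le_val (n t : ℕ) : #{d : Fin n | t ≤ (d : ℕ)} = n - t := by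
  have h := card_filter_add_card_filter_not (s := univ) fun d : Fin n => (d : ℕ) < t
  simp only [Fin.card_filter_val_lt, card_univ, Fintype.card_fin, not_lt] at h
  omega

abbrev CardSubset (ι : Type*) (m : ℕ) := {T : Finset ι // #T = m}

namespace CardSubset

variable {ι : Type*} {m : ℕ}

theorem nonempty [NeZero m] (T : CardSubset ι m) : T.1.Nonempty :=
  card_pos.1 (by rw [T.2]; exact NeZero.pos m)

theorem card_filter_mem [Fintype ι] [DecidableEq ι] (hm : 0 < m) (a : ι) :
    #{T : CardSubset ι m | a ∈ T.1} = (Fintype.card ι - 1).choose (m - 1) := by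
  rw [← card_univ, ← card_erase_of_mem (mem_univ a), ← card_powersetCard]
  refine card_bij' (fun T _ => T.1.erase a)
    (fun A hA => ⟨insert a A, by
      obtain ⟨hsub, hcard⟩ := mem_powersetCard.1 hA
      rw [card_insert_of_notMem fun ha => notMem_erase a univ (hsub ha), hcard]
      omega⟩) ?_ ?_ ?_ ?_
  · intro T hT
    rw [mem_filter] at hT
    rw [mem_powersetCard, card_erase_of_mem hT.2, T.2]
    exact ⟨erase_subset_erase a (subset_univ _), rfl⟩
  · intro A _
    simp
  · intro T hT
    exact Subtype.ext (insert_erase (mem_filter.1 hT).2)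
  · intro A hA
    exact erase_insert fun ha => notMem_erase a univ ((mem_powersetCard.1 hA).1 ha)

section Label

variable [LinearOrder ι]

def label (T : CardSubset ι m) : Fin m ≃ T.1 := (T.1.orderIsoOfFin T.2).toEquiv

def pos (T : CardSubset ι m) {k : ι} (hk : k ∈ T.1) : Fin m := T.label.symm ⟨k, hk⟩

@[simp] theorem label_mem (T : CardSubset ι m) (p : Fin m) : (T.label p : ι) ∈ T.1 :=
  (T.label p).2

@[simp] theorem label_pos (T : CardSubset ι m) {k : ι} (hk : k ∈ T.1) :
    (T.label (T.pos hk) : ι) = k := by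
  simp [pos]

@[simp] theorem pos_label (T : CardSubset ι m) (p : Fin m) : T.pos (T.label_mem p) = p :=
  T.label.symm_apply_apply p

theorem label_injective (T : CardSubset ι m) : Function.Injective fun p => (T.label p : ι) :=
  Subtype.val_injective.comp T.label.injective

theorem card_filter_mem_and (T : CardSubset ι m) (P : ι → Prop) [DecidablePred P] [Fintype ι] :
    #{k | k ∈ T.1 ∧ P k} = #{p | P (T.label p)} := by
  symm
  refine card_bij (fun p _ => (T.label p : ι)) ?_ (fun _ _ _ _ h => T.label_injective h) ?_
  · intro p hp
    simpa using hp
  · intro k hk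
    rw [mem_filter] at hk
    exact ⟨T.pos hk.2.1, by simpa using hk.2.2, T.label_pos hk.2.1⟩

end Label

section Exchange

variable [DecidableEq ι]

def exchange (T : CardSubset ι m) {x k : ι} (hx : x ∈ T.1) (hk : k ∉ T.1) : CardSubset ι m :=
  ⟨insert k (T.1.erase x), by
    rw [card_insert_of_notMem fun h => hk (mem_of_mem_erase h), card_erase_add_one hx, T.2]⟩

variable (T : CardSubset ι m) {x k : ι} (hx : x ∈ T.1) (hk : k ∉ T.1)

theorem mem_exchange : k ∈ (T.exchange hx hk).1 := mem_insert_self _ _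

theorem notMem_exchange : x ∉ (T.exchange hx hk).1 := by
  simp [exchange, ne_of_mem_of_not_mem hx hk]

theorem insert_erase_exchange : insert x ((T.exchange hx hk).1.erase k) = T.1 := by
  rw [exchange, erase_insert fun h => hk (mem_of_mem_erase h), insert_erase hx]

end Exchange

end CardSubset

namespace MAPDAScheme

variable {q t L : ℕ}

abbrev Symbol (q t L : ℕ) :=
  (CardSubset (Fin q) (t + L) × {d : Fin (t + L) // t ≤ (d : ℕ)}) ⊕
    {Ux : CardSubset (Fin q) (t + L) × Fin q // Ux.2 ∉ Ux.1.1}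

def Symbol.support : Symbol q t L → Finset (Fin q)
  | .inl s => s.1.1
  | .inr s => s.1.1.1

theorem card_symbol (h : t + L ≤ q) :
    Fintype.card (Symbol q t L) = (q - t) * q.choose (t + L) := by
  have hout : Fintype.card {Ux : CardSubset (Fin q) (t + L) × Fin q // Ux.2 ∉ Ux.1.1}
      = q.choose (t + L) * (q - (t + L)) := by
    refine (Fintype.card_congr (Equiv.subtypeProdEquivSigmaSubtype
      fun (U : CardSubset (Fin q) (t + L)) x => x ∉ U.1)).trans ?_
    simp only [Fintype.card_sigma, Fintype.card_subtype_compl, Fintype.card_coe,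
      Fintype.card_fin]
    rw [Fintype.sum_congr _ _ fun U => by rw [U.2], sum_const, card_univ,
      Fintype.card_finset_len, Fintype.card_fin, smul_eq_mul]
  rw [Fintype.card_sum, Fintype.card_prod, Fintype.card_finset_len, Fintype.card_fin,
    Fintype.card_subtype fun d : Fin (t + L) => t ≤ (d : ℕ), Fin.card_filter_le_val, hout,
    ← mul_add, mul_comm]
  congr 1
  omega

variable [NeZero L]

def pivot (T : CardSubset (Fin q) (t + L)) (i : Fin (t + L)) : Fin q :=
  T.label (i - ⟨t, lt_add_of_pos_right t (NeZero.pos L)⟩)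

theorem pivot_mem (T : CardSubset (Fin q) (t + L)) (i : Fin (t + L)) : pivot T i ∈ T.1 :=
  T.label_mem _

theorem pivot_injective (T : CardSubset (Fin q) (t + L)) : Function.Injective (pivot T) :=
  fun _ _ h => sub_left_inj.1 (T.label_injective h)

def entry (T : CardSubset (Fin q) (t + L)) (i : Fin (t + L)) (k : Fin q) :
    Option (Symbol q t L) :=
  if hk : k ∈ T.1 then
    if hd : t ≤ (i - T.pos hk : Fin (t + L)) then some (.inl (T, ⟨i - T.pos hk, hd⟩))
    else none
  else
    some (.inr ⟨(T.exchange (pivot_mem T i) hk, pivot T i),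
      T.notMem_exchange (pivot_mem T i) hk⟩)

variable {T : CardSubset (Fin q) (t + L)} {i : Fin (t + L)} {k : Fin q}

theorem isSome_entry_iff_of_mem (hk : k ∈ T.1) :
    (entry T i k).isSome ↔ t ≤ (i - T.pos hk : Fin (t + L)) := by
  unfold entry
  split_ifs <;> simp_all

theorem isSome_entry_pivot : (entry T i (pivot T i)).isSome := by
  rw [isSome_entry_iff_of_mem (pivot_mem T i), show T.pos (pivot_mem T i) = _ from T.pos_label _,
    sub_sub_cancel]

theorem card_filter_entry_eq_none_of_mem (hk : k ∈ T.1) : #{i | entry T i k = none} = t := by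
  have hnone (i : Fin (t + L)) : entry T i k = none ↔ (i - T.pos hk : Fin (t + L)) < t := by
    rw [← Option.not_isSome_iff_eq_none, isSome_entry_iff_of_mem hk, not_le]
  rw [card_equiv (Equiv.subRight (T.pos hk)) (t := ({d | (d : ℕ) < t} : Finset (Fin (t + L))))
      (by simp [hnone]),
    Fin.card_filter_val_lt, min_eq_right (Nat.le_add_right t L)]

theorem entry_ne_none_of_not_mem (hk : k ∉ T.1) : entry T i k ≠ none := by
  simp [entry, hk]

theorem card_filter_entry_eq_none (k : Fin q) :
    #{r : CardSubset (Fin q) (t + L) × Fin (t + L) | entry r.1 r.2 k = none}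
      = t * (q - 1).choose (t + L - 1) := by
  have hrow (T : CardSubset (Fin q) (t + L)) :
      #{i | entry T i k = none} = if k ∈ T.1 then t else 0 := by
    split_ifs with hk
    · exact card_filter_entry_eq_none_of_mem hk
    · exact card_eq_zero.2 (filter_eq_empty_iff.2 fun _ _ => entry_ne_none_of_not_mem hk)
  rw [card_filter, Fintype.sum_prod_type]
  simp only [← card_filter, hrow]
  rw [← sum_filter, sum_const, smul_eq_mul, CardSubset.card_filter_mem (NeZero.pos (t + L)),
    Fintype.card_fin, mul_comm]

theorem card_filter_mem_isSome (T : CardSubset (Fin q) (t + L)) (i : Fin (t + L)) :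
    #{k | k ∈ T.1 ∧ (entry T i k).isSome} = L := by
  have hsome (p : Fin (t + L)) :
      (entry T i (T.label p)).isSome ↔ t ≤ (i - p : Fin (t + L)) := by
    rw [isSome_entry_iff_of_mem (T.label_mem p), T.pos_label]
  rw [CardSubset.card_filter_mem_and,
    card_equiv (Equiv.subLeft i) (t := ({d | t ≤ (d : ℕ)} : Finset (Fin (t + L))))
      (by simp [hsome]),
    Fin.card_filter_le_val, Nat.add_sub_cancel_left]

theorem mem_support_of_entry_eq_some {s : Symbol q t L} (h : entry T i k = some s) :
    k ∈ s.support := by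
  unfold entry at h
  split_ifs at h with hk
  · cases h
    exact hk
  · cases h
    exact T.mem_exchange (pivot_mem T i) hk

theorem card_filter_mem_support_isSome_le {s : Symbol q t L} {k₀ : Fin q}
    (h : entry T i k₀ = some s) : #{k | k ∈ s.support ∧ (entry T i k).isSome} ≤ L := by
  unfold entry at h
  split_ifs at h with hk₀
  · cases h
    exact (card_filter_mem_isSome T i).le
  · cases h
    set A : Finset (Fin q) := {k | k ∈ T.1 ∧ (entry T i k).isSome}
    have hpivot : pivot T i ∈ A := by simp [A, pivot_mem, isSome_entry_pivot]
    calc #{k | k ∈ (T.exchange (pivot_mem T i) hk₀).1 ∧ (entry T i k).isSome}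
        ≤ #(insert k₀ (A.erase (pivot T i))) := card_le_card fun k hk => by
          simp only [A, CardSubset.exchange, mem_filter, mem_insert, mem_erase] at hk ⊢
          tauto
      _ ≤ #(A.erase (pivot T i)) + 1 := card_insert_le _ _
      _ = L := by rw [card_erase_add_one hpivot]; exact card_filter_mem_isSome T i

theorem eq_of_entry_eq_some {T₁ T₂ : CardSubset (Fin q) (t + L)} {i₁ i₂ : Fin (t + L)}
    {s : Symbol q t L} (h₁ : entry T₁ i₁ k = some s) (h₂ : entry T₂ i₂ k = some s) :
    (T₁, i₁) = (T₂, i₂) := by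
  unfold entry at h₁ h₂
  split_ifs at h₁ h₂ with hk₁ _ hk₂ _ hk₂ <;>
    rw [← h₂, Option.some_inj] at h₁ <;>
    simp only [Sum.inl.injEq, Sum.inr.injEq, Prod.mk.injEq, Subtype.mk.injEq, reduceCtorEq] at h₁
  · obtain ⟨rfl, hd⟩ := h₁
    exact Prod.ext rfl (sub_left_inj.1 hd)
  · obtain ⟨hU, hx⟩ := h₁
    obtain rfl : T₁ = T₂ := Subtype.ext <| by
      rw [← T₁.insert_erase_exchange (pivot_mem T₁ i₁) hk₁,
        ← T₂.insert_erase_exchange (pivot_mem T₂ i₂) hk₂, hU, hx]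
    exact Prod.ext rfl (pivot_injective T₁ hx)

theorem exists_entry_eq_some (s : Symbol q t L) : ∃ T i k, entry T i k = some s := by
  rcases s with ⟨U, d, hd⟩ | ⟨⟨U, x⟩, hxU⟩
  · obtain ⟨k, hk⟩ := U.nonempty
    refine ⟨U, d + U.pos hk, k, ?_⟩
    simp [entry, hk, hd]
  · obtain ⟨k, hk⟩ := U.nonempty
    set T := U.exchange hk hxU
    have hxT : x ∈ T.1 := U.mem_exchange hk hxU
    have hkT : k ∉ T.1 := U.notMem_exchange hk hxU
    have ht : t < t + L := lt_add_of_pos_right t (NeZero.pos L)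
    refine ⟨T, T.pos hxT + ⟨t, ht⟩, k, ?_⟩
    have hpivot : pivot T (T.pos hxT + ⟨t, ht⟩) = x := by simp [pivot]
    simp only [entry, hkT, dite_false, Option.some_inj, Sum.inr.injEq, Subtype.mk.injEq,
      Prod.mk.injEq, hpivot, and_true]
    exact Subtype.ext (U.insert_erase_exchange hk hxU)

theorem isMAPDAOn_entry :
    IsMAPDAOn L (t * (q - 1).choose (t + L - 1))
      fun r : CardSubset (Fin q) (t + L) × Fin (t + L) => entry r.1 r.2 where
  card_filter_eq_none := card_filter_entry_eq_none
  exists_eq_some s := by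
    obtain ⟨T, i, k, h⟩ := exists_entry_eq_some s
    exact ⟨(T, i), k, h⟩
  eq_of_eq_some _ _ _ _ := eq_of_entry_eq_some
  card_filter_isSome_le s r := by
    rintro ⟨k₀, h₀⟩
    refine le_trans (card_le_card fun k hk => ?_) (card_filter_mem_support_isSome_le h₀)
    simp only [mem_filter, mem_univ, true_and] at hk ⊢
    obtain ⟨⟨r', hr'⟩, hsome⟩ := hk
    exact ⟨mem_support_of_entry_eq_some hr', hsome⟩

end MAPDAScheme

theorem exists_MAPDA_scheme2_general (K t L : ℕ) (hL : 0 < L)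
    (htL : t + L ≤ K) (α F Z S : ℕ)
    (hα : α = Nat.gcd K (Nat.gcd t L))
    (hF : F = ((t + L) / α) * Nat.choose (K / α) ((t + L) / α))
    (hZ : Z = (t / α) * Nat.choose (K / α - 1) ((t + L) / α - 1))
    (hS : S = ((K - t) / α) * Nat.choose (K / α) ((t + L) / α)) :
    ∃ P : Fin F → Fin K → Option (Fin S), IsMAPDA L K F Z S P := by
  have hα0 : 0 < α := hα ▸ Nat.gcd_pos_of_pos_right _ (Nat.gcd_pos_of_pos_right _ hL)
  obtain ⟨q, rfl⟩ : α ∣ K := hα ▸ Nat.gcd_dvd_left _ _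
  obtain ⟨t', rfl⟩ : α ∣ t := hα ▸ (Nat.gcd_dvd_right _ _).trans (Nat.gcd_dvd_left _ _)
  obtain ⟨L', rfl⟩ : α ∣ L := hα ▸ (Nat.gcd_dvd_right _ _).trans (Nat.gcd_dvd_right _ _)
  simp only [← Nat.mul_add, ← Nat.mul_sub, Nat.mul_div_cancel_left _ hα0] at hF hZ hS htL
  have : NeZero α := ⟨hα0.ne'⟩
  have : NeZero L' := ⟨by rintro rfl; simp at hL⟩
  have h := (MAPDAScheme.isMAPDAOn_entry (q := q) (t := t') (L := L')).replicate (Fin α)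
  rw [Fintype.card_fin] at h
  subst hF hZ hS
  exact h.exists_isMAPDA (by simp [mul_comm]) (by simp)
    (MAPDAScheme.card_symbol (Nat.le_of_mul_le_mul_left htL hα0))

/-- For all positive integers `K, t, L` with `t + L ≤ K`, with
`α = gcd(K, gcd(t, L))`, `F = ((t+L)/α)·C(K/α, (t+L)/α)`,
`Z = (t/α)·C(K/α − 1, (t+L)/α − 1)` and `S = ((K−t)/α)·C(K/α, (t+L)/α)`,
there exists an `(L, K, F, Z, S)` MAPDA. -/
theorem exists_MAPDA_scheme2 (K t L : ℕ) (hK : 0 < K) (ht : 0 < t) (hL : 0 < L)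
    (htL : t + L ≤ K) (α F Z S : ℕ)
    (hα : α = Nat.gcd K (Nat.gcd t L))
    (hF : F = ((t + L) / α) * Nat.choose (K / α) ((t + L) / α))
    (hZ : Z = (t / α) * Nat.choose (K / α - 1) ((t + L) / α - 1))
    (hS : S = ((K - t) / α) * Nat.choose (K / α) ((t + L) / α)) :
    ∃ P : Fin F → Fin K → Option (Fin S), IsMAPDA L K F Z S P :=
  exists_MAPDA_scheme2_general K t L hL htL α F Z S hα hF hZ hS
end

section
/- For all positive integers K and t with t < K, there exists a (K−t, K, K, t, K−t) multiple-antenna placement delivery array; that is, an MAPDA with L = K−t antennas, K columns, F = K rows, exactly Z = t stars per column, and S = K−t distinct integers. -/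
/-- Counting lemma: exactly `t` of the shifts `x + a` land below `t`. -/
lemma card_shift_lt (K t : ℕ) (hK : 0 < K) (htK : t < K) (a : Fin K) :
    haveI : NeZero K := ⟨hK.ne'⟩
    (Finset.univ.filter fun x : Fin K => (x + a).val < t).card = t := by
  haveI : NeZero K := ⟨hK.ne'⟩
  have h1 : (Finset.univ.filter fun x : Fin K => (x + a).val < t).card
      = (Finset.univ.filter fun y : Fin K => y.val < t).card := by
    apply Finset.card_equiv (Equiv.addRight a)
    intro i; simp
  rw [h1]
  have h2 : (Finset.univ.filter fun y : Fin K => y.val < t)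
      = Finset.Iio (⟨t, htK⟩ : Fin K) := by
    ext y; simp [Fin.lt_def]
  rw [h2, Fin.card_Iio]

/-- Variant with the shift on the left. -/
lemma card_shift_lt' (K t : ℕ) (hK : 0 < K) (htK : t < K) (a : Fin K) :
    haveI : NeZero K := ⟨hK.ne'⟩
    (Finset.univ.filter fun x : Fin K => (a + x).val < t).card = t := by
  haveI : NeZero K := ⟨hK.ne'⟩
  have := card_shift_lt K t hK htK a
  simpa [add_comm] using this

/-- For all positive integers `K` and `t` with `t < K`, there exists a
`(K−t, K, K, t, K−t)` multiple-antenna placement delivery array. -/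
theorem exists_MAPDA_scheme3 (K t : ℕ) (hK : 0 < K) (ht : 0 < t) (htK : t < K) :
    ∃ P : Fin K → Fin K → Option (Fin (K - t)), IsMAPDA (K - t) K K t (K - t) P := by
  haveI : NeZero K := ⟨hK.ne'⟩
  refine ⟨fun f k => if h : (f + k).val < t then none
    else some ⟨(f + k).val - t, by have := (f + k).isLt; omega⟩, ?_, ?_, ?_, ?_⟩
  · -- C1
    intro k
    dsimp only
    have heq : (Finset.univ.filter fun f : Fin K =>
        (if h : (f + k).val < t then none
          else some (⟨(f + k).val - t, by have := (f + k).isLt; omega⟩ : Fin (K - t))) = none)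
        = Finset.univ.filter fun f : Fin K => (f + k).val < t := by
      ext f
      simp only [Finset.mem_filter, Finset.mem_univ, true_and]
      by_cases h : (f + k).val < t <;> simp [h]
    rw [heq, card_shift_lt K t hK htK k]
  · -- C2
    intro s
    have hst : s.val + t < K := by omega
    refine ⟨⟨s.val + t, hst⟩, ⟨0, hK⟩, ?_⟩
    dsimp only
    have hval : ((⟨s.val + t, hst⟩ : Fin K) + ⟨0, hK⟩).val = s.val + t := by
      simp [Fin.add_def, Nat.mod_eq_of_lt hst]
    simp only [hval]
    rw [dif_neg (by omega)]
    simp only [Option.some.injEq]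
    ext
    simp
  · -- C3
    intro s k f₁ f₂ h1 h2
    dsimp only at h1 h2
    by_cases ha : (f₁ + k).val < t
    · simp [ha] at h1
    by_cases hb : (f₂ + k).val < t
    · simp [hb] at h2
    rw [dif_neg ha] at h1
    rw [dif_neg hb] at h2
    simp only [Option.some.injEq, Fin.mk.injEq] at h1 h2
    have hv1 : (f₁ + k).val - t = s.val := congrArg Fin.val h1
    have hv2 : (f₂ + k).val - t = s.val := congrArg Fin.val h2
    have hval : (f₁ + k).val = (f₂ + k).val := by omega
    exact add_right_cancel (Fin.ext hval : f₁ + k = f₂ + k)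
  · -- C4
    intro s f _
    dsimp only
    have hsub : (Finset.univ.filter fun k : Fin K =>
          (∃ f', (if h : (f' + k).val < t then none
            else some (⟨(f' + k).val - t, by have := (f' + k).isLt; omega⟩ : Fin (K - t))) = some s) ∧
          (if h : (f + k).val < t then none
            else some (⟨(f + k).val - t, by have := (f + k).isLt; omega⟩ : Fin (K - t))).isSome = true)
        ⊆ Finset.univ.filter fun k : Fin K => ¬ (f + k).val < t := by
      intro k hk
      simp only [Finset.mem_filter, Finset.mem_univ, true_and] at hk ⊢
      intro h
      rw [dif_pos h] at hk
      simp at hk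
    refine le_trans (Finset.card_le_card hsub) ?_
    rw [Finset.filter_not, Finset.card_sdiff_of_subset (Finset.filter_subset _ _),
      Finset.card_univ, Fintype.card_fin, card_shift_lt' K t hK htK f]
end

section
/- Let L and t be positive integers with L ≤ t and set g = t + L. Let H be an L×g complex matrix such that every L×L column-submatrix of H is invertible. Let star : Fin g → Fin g → Prop be a relation (star i j meaning "user i caches packet j") such that for every j, ¬ star j j, and for every j the set { i : ¬ star i j } has at most L elements. Then there exists a g×g complex matrix V such that: (i) V i j = 0 whenever ¬ star i j; and (ii) the matrix B := Hᴴ · H · V satisfies B j j = 1 for every j, and B i j = 0 for every i ≠ j with ¬ star i j. -/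
open Matrix

open scoped Classical in
/-- One-shot precoder design: with `g = t + L` users, `L ≤ t`, a generic channel
matrix `H` (every `L × L` column-submatrix invertible), and a caching relation
`star` such that no user caches its own requested packet and each packet is not
cached by at most `L` users, there is a precoding matrix `V`, supported on the
cachers, such that `B = Hᴴ H V` has ones on the diagonal and zeros at every
off-diagonal position `(i, j)` with user `i` not caching packet `j`. -/
theorem exists_precoding_matrix (L t : ℕ) (hL : 0 < L) (ht : 0 < t) (hLt : L ≤ t)
    (g : ℕ) (hg : g = t + L)
    (H : Matrix (Fin L) (Fin g) ℂ)
    (hH : ∀ e : Fin L → Fin g, Function.Injective e → IsUnit (H.submatrix id e))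
    (star : Fin g → Fin g → Prop)
    (hdiag : ∀ j : Fin g, ¬ star j j)
    (hcard : ∀ j : Fin g, (Finset.univ.filter fun i : Fin g => ¬ star i j).card ≤ L) :
    ∃ V : Matrix (Fin g) (Fin g) ℂ,
      (∀ i j : Fin g, ¬ star i j → V i j = 0) ∧
      (∀ j : Fin g, (Hᴴ * H * V) j j = 1) ∧
      (∀ i j : Fin g, i ≠ j → ¬ star i j → (Hᴴ * H * V) i j = 0) := by
  -- Columnwise construction
  have key : ∀ j : Fin g, ∃ v : Fin g → ℂ,
      (∀ i, ¬ star i j → v i = 0) ∧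
      (∀ i, ¬ star i j → ((Hᴴ * H) *ᵥ v) i = if i = j then 1 else 0) := by
    intro j
    set S : Finset (Fin g) := Finset.univ.filter fun i : Fin g => ¬ star i j with hSdef
    have hScard : S.card ≤ L := hcard j
    have hLg : L ≤ g := by omega
    -- superset T of S with card L
    obtain ⟨T, hST, hTcard⟩ := Finset.exists_superset_card_eq hScard (by simpa using hLg)
    -- subset T' of Sᶜ with card L
    have hcompl : L ≤ Sᶜ.card := by
      have : Sᶜ.card = g - S.card := by simp [Finset.card_compl]
      omega
    obtain ⟨T', hT'sub, hT'card⟩ := Finset.exists_subset_card_eq hcompl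
    set e : Fin L → Fin g := fun k => ((T.orderIsoOfFin hTcard) k : Fin g) with he
    set e' : Fin L → Fin g := fun k => ((T'.orderIsoOfFin hT'card) k : Fin g) with he'
    have hei : Function.Injective e := fun a b hab => by
      have := Subtype.ext hab
      simpa using (T.orderIsoOfFin hTcard).injective this
    have he'i : Function.Injective e' := fun a b hab => by
      have := Subtype.ext hab
      simpa using (T'.orderIsoOfFin hT'card).injective this
    have he'notS : ∀ k, e' k ∉ S := fun k hk => by
      have : e' k ∈ Sᶜ := hT'sub (by simp [he'])
      exact (Finset.mem_compl.mp this) hk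
    set A : Matrix (Fin L) (Fin L) ℂ := H.submatrix id e with hA
    set A' : Matrix (Fin L) (Fin L) ℂ := H.submatrix id e' with hA'
    have hAun : IsUnit A := hH e hei
    have hA'un : IsUnit A' := hH e' he'i
    have hAHun : IsUnit Aᴴ.det := by
      rw [Matrix.det_conjTranspose]
      exact ((Matrix.isUnit_iff_isUnit_det A).mp hAun).star
    have hA'det : IsUnit A'.det := (Matrix.isUnit_iff_isUnit_det A').mp hA'un
    -- target vector on T
    set b : Fin L → ℂ := fun k => if e k = j then 1 else 0 with hb
    set w : Fin L → ℂ := Aᴴ⁻¹ *ᵥ b with hw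
    set u : Fin L → ℂ := A'⁻¹ *ᵥ w with hu
    set v : Fin g → ℂ := fun i => ∑ k : Fin L, if e' k = i then u k else 0 with hv
    have hAw : Aᴴ *ᵥ w = b := by
      rw [hw, Matrix.mulVec_mulVec, Matrix.mul_nonsing_inv _ hAHun, Matrix.one_mulVec]
    have hA'u : A' *ᵥ u = w := by
      rw [hu, Matrix.mulVec_mulVec, Matrix.mul_nonsing_inv _ hA'det, Matrix.one_mulVec]
    have hvzero : ∀ i, ¬ star i j → v i = 0 := by
      intro i hi
      have hiS : i ∈ S := by simp [hSdef, hi]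
      rw [hv]
      apply Finset.sum_eq_zero
      intro k _
      have : e' k ≠ i := fun h => he'notS k (h ▸ hiS)
      simp [this]
    refine ⟨v, hvzero, ?_⟩
    intro i hi
    have hiS : i ∈ S := by simp [hSdef, hi]
    have hiT : i ∈ T := hST hiS
    -- H *ᵥ v = A' *ᵥ u = w
    have hHv : H *ᵥ v = w := by
      rw [← hA'u]
      funext l
      rw [Matrix.mulVec, Matrix.mulVec]
      simp only [dotProduct, hv, Finset.mul_sum]
      rw [Finset.sum_comm]
      apply Finset.sum_congr rfl
      intro k _
      rw [Finset.sum_eq_single (e' k)]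
      · simp [hA']
      · intro i' _ hne
        simp [Ne.symm hne]
      · simp
    -- pull back through e at i
    set k₀ : Fin L := (T.orderIsoOfFin hTcard).symm ⟨i, hiT⟩ with hk₀
    have hek₀ : e k₀ = i := by
      rw [he, hk₀]
      simp
    have : ((Hᴴ * H) *ᵥ v) i = (Aᴴ *ᵥ w) k₀ := by
      rw [← Matrix.mulVec_mulVec, hHv]
      rw [Matrix.mulVec, Matrix.mulVec]
      simp only [dotProduct]
      apply Finset.sum_congr rfl
      intro l _
      simp [hA, Matrix.conjTranspose_apply, hek₀]
    rw [this, hAw, hb]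
    simp [hek₀]
  choose v hv0 hvB using key
  refine ⟨Matrix.of fun i j => v j i, fun i j h => hv0 j i h, ?_, ?_⟩
  · intro j
    have := hvB j j (hdiag j)
    simpa [Matrix.mulVec, dotProduct, Matrix.mul_apply] using this
  · intro i j hne h
    have := hvB j i h
    simpa [Matrix.mulVec, dotProduct, Matrix.mul_apply, hne] using this
end

section
/- Let P be an (L, K, F, Z, S) multiple-antenna placement delivery array, let g and s ∈ [S] be such that the integer s appears exactly g times in P with g ≥ 2L, at positions (f_1, k_1), …, (f_g, k_g) (the columns k_1, …, k_g are pairwise distinct by condition C3). Let H be an L×K complex matrix such that every L×L column-submatrix of H is invertible, and let H_s denote the L×g submatrix of H on the columns k_1, …, k_g. Then there exists a g×g complex matrix V such that: (i) V i j = 0 whenever P(f_j, k_i) is an integer (i.e., whenever user k_i does not cache the packet indexed by f_j); and (ii) the matrix B := H_sᴴ · H_s · V satisfies B j j = 1 for every j ∈ [g], and B i j = 0 for every i ≠ j such that P(f_j, k_i) is an integer. -/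
open Matrix

/-!
For a column `j`, let `A` be the set of indices `i` with `P (f j) (k i)` an integer; `A` has at
most `L` elements by C4 and, as `g ≥ 2L`, leaves at least `L` indices outside. Column `j` of `V`
comes from two interpolations with `H_s`: invertibility on `L` columns containing `A` gives `u`
with `(H_sᴴ u)_i = δ_ij` for `i ∈ A`, and invertibility on `L` columns outside `A` gives `v`,
vanishing on `A`, with `H_s v = u`.
-/

open Finset

theorem Finset.exists_injective_fin_range_eq {n : Type*} (s : Finset n) {L : ℕ} (h : #s = L) :
    ∃ e : Fin L → n, Function.Injective e ∧ Set.range e = s :=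
  ⟨(↑) ∘ (s.equivFinOfCardEq h).symm, Subtype.val_injective.comp (Equiv.injective _), by
    simp [Set.range_comp]⟩

theorem Matrix.exists_mulVec_eq_of_isUnit_submatrix {R m n : Type*} [CommRing R] [Fintype m]
    [DecidableEq m] [Fintype n] [DecidableEq n] (A : Matrix m n R) {e : m → n}
    (hA : IsUnit (A.submatrix id e)) (u : m → R) :
    ∃ v : n → R, (∀ i ∉ Set.range e, v i = 0) ∧ A *ᵥ v = u := by
  obtain ⟨w, rfl⟩ := mulVec_surjective_iff_isUnit.2 hA u
  refine ⟨(1 : Matrix n n R).submatrix id e *ᵥ w, fun i hi => ?_, ?_⟩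
  · have : ∀ l, i ≠ e l := fun l h => hi ⟨l, h.symm⟩
    simp [mulVec, dotProduct, this]
  · rw [mulVec_mulVec]
    congr 1
    ext i l
    simp [mul_apply, one_apply]

theorem Matrix.exists_mulVec_comp_eq_of_isUnit_submatrix {R m n : Type*} [CommRing R]
    [Fintype m] [DecidableEq m] (C : Matrix n m R) {e : m → n}
    (hC : IsUnit (C.submatrix e id)) (t : m → R) : ∃ u : m → R, (C *ᵥ u) ∘ e = t :=
  mulVec_surjective_iff_isUnit.2 hC t

theorem Matrix.exists_conjTranspose_mul_self_mulVec_eq_on {R : Type*} [CommRing R] [StarRing R]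
    {L : ℕ} {n : Type*} [Fintype n] [DecidableEq n] (G : Matrix (Fin L) n R)
    (hG : ∀ e : Fin L → n, Function.Injective e → IsUnit (G.submatrix id e))
    (A : Finset n) (hA : #A ≤ L) (hAc : L ≤ #Aᶜ) (t : n → R) :
    ∃ v : n → R, (∀ i ∈ A, v i = 0) ∧ ∀ i ∈ A, ((Gᴴ * G) *ᵥ v) i = t i := by
  obtain ⟨A', hAA', -, hA'⟩ :=
    exists_subsuperset_card_eq (subset_univ A) hA (hAc.trans (card_le_univ _))
  obtain ⟨T, hT, hTcard⟩ := exists_subset_card_eq hAc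
  obtain ⟨e₂, he₂, hrange₂⟩ := A'.exists_injective_fin_range_eq hA'
  obtain ⟨e₁, he₁, hrange₁⟩ := T.exists_injective_fin_range_eq hTcard
  have hGe₂ : IsUnit (Gᴴ.submatrix e₂ id) := by
    rw [← conjTranspose_submatrix, ← star_eq_conjTranspose]
    exact (hG e₂ he₂).star
  obtain ⟨u, hu⟩ := Gᴴ.exists_mulVec_comp_eq_of_isUnit_submatrix hGe₂ (t ∘ e₂)
  obtain ⟨v, hv0, rfl⟩ := G.exists_mulVec_eq_of_isUnit_submatrix (hG e₁ he₁) u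
  refine ⟨v, fun i hi => hv0 i ?_, fun i hi => ?_⟩
  · rw [hrange₁]
    exact fun hiT => mem_compl.1 (hT hiT) hi
  · obtain ⟨l, rfl⟩ : i ∈ Set.range e₂ := hrange₂ ▸ hAA' hi
    rw [← mulVec_mulVec]
    exact congrFun hu l

theorem IsMAPDA.card_filter_isSome_le {L K F Z S g : ℕ} {P : Fin F → Fin K → Option (Fin S)}
    (hP : IsMAPDA L K F Z S P) {s : Fin S} {f : Fin g → Fin F} {k : Fin g → Fin K}
    (hk : Function.Injective k) (hocc : ∀ j, P (f j) (k j) = some s) (j : Fin g) :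
    #{i | (P (f j) (k i)).isSome} ≤ L := by
  refine (card_le_card_of_injOn k (fun i hi => ?_) hk.injOn).trans
    (hP.2.2.2 s (f j) ⟨k j, hocc j⟩)
  simp only [coe_filter, mem_univ, true_and, Set.mem_ofPred_eq] at hi ⊢
  exact ⟨⟨f i, hocc i⟩, hi⟩

theorem exists_precoding_matrix_of_MAPDA_general (L K F Z S : ℕ)
    (P : Fin F → Fin K → Option (Fin S)) (hP : IsMAPDA L K F Z S P)
    (g : ℕ) (hg : 2 * L ≤ g) (s : Fin S)
    (f : Fin g → Fin F) (k : Fin g → Fin K)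
    (hkinj : Function.Injective k)
    (hocc : ∀ j : Fin g, P (f j) (k j) = some s)
    (H : Matrix (Fin L) (Fin K) ℂ)
    (hH : ∀ e : Fin L → Fin K, Function.Injective e → IsUnit (H.submatrix id e)) :
    ∃ V : Matrix (Fin g) (Fin g) ℂ,
      (∀ i j : Fin g, (P (f j) (k i)).isSome = true → V i j = 0) ∧
      (∀ j : Fin g, ((H.submatrix id k)ᴴ * H.submatrix id k * V) j j = 1) ∧
      (∀ i j : Fin g, i ≠ j → (P (f j) (k i)).isSome = true →
          ((H.submatrix id k)ᴴ * H.submatrix id k * V) i j = 0) := by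
  have hHs : ∀ e : Fin L → Fin g, Function.Injective e →
      IsUnit ((H.submatrix id k).submatrix id e) := fun e he => by
    simpa [submatrix_submatrix] using hH _ (hkinj.comp he)
  have hcol (j : Fin g) := by
    have hA := hP.card_filter_isSome_le hkinj hocc j
    exact (H.submatrix id k).exists_conjTranspose_mul_self_mulVec_eq_on hHs _ hA
      (by rw [card_compl, Fintype.card_fin]; omega) (Pi.single j 1)
  choose v hv0 hv using hcol
  refine ⟨(of v)ᵀ, fun i j hij => hv0 j i (by simpa using hij), fun j => ?_,
    fun i j hne hij => ?_⟩
  · exact (hv j j (by simp [hocc j])).trans (Pi.single_eq_same j 1)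
  · exact (hv j i (by simpa using hij)).trans (Pi.single_eq_of_ne hne 1)

/-- Core of Theorem 1: given an `(L, K, F, Z, S)` MAPDA `P`, an integer `s`
appearing exactly `g ≥ 2L` times, at positions `(f j, k j)` for `j ∈ [g]` (the
columns `k j` pairwise distinct), and a generic channel matrix `H` (every
`L × L` column-submatrix invertible), letting `H_s` be the submatrix of `H` on
columns `k 1, …, k g`, there is a `g × g` precoding matrix `V` vanishing at
`(i, j)` whenever `P (f j) (k i)` is an integer, such that `B = H_sᴴ H_s V` has
ones on the diagonal and `B i j = 0` for every `i ≠ j` with `P (f j) (k i)` an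
integer (one-shot decodability with identity downlink precoding). -/
theorem exists_precoding_matrix_of_MAPDA (L K F Z S : ℕ)
    (hL : 0 < L) (hK : 0 < K) (hF : 0 < F) (hZ : 0 < Z) (hS : 0 < S)
    (P : Fin F → Fin K → Option (Fin S)) (hP : IsMAPDA L K F Z S P)
    (g : ℕ) (hg : 2 * L ≤ g) (s : Fin S)
    (f : Fin g → Fin F) (k : Fin g → Fin K)
    (hkinj : Function.Injective k)
    (hocc : ∀ j : Fin g, P (f j) (k j) = some s)
    (hall : ∀ (f' : Fin F) (k' : Fin K), P f' k' = some s → ∃ j : Fin g, f' = f j ∧ k' = k j)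
    (H : Matrix (Fin L) (Fin K) ℂ)
    (hH : ∀ e : Fin L → Fin K, Function.Injective e → IsUnit (H.submatrix id e)) :
    ∃ V : Matrix (Fin g) (Fin g) ℂ,
      (∀ i j : Fin g, (P (f j) (k i)).isSome = true → V i j = 0) ∧
      (∀ j : Fin g, ((H.submatrix id k)ᴴ * H.submatrix id k * V) j j = 1) ∧
      (∀ i j : Fin g, i ≠ j → (P (f j) (k i)).isSome = true →
          ((H.submatrix id k)ᴴ * H.submatrix id k * V) i j = 0) :=
  exists_precoding_matrix_of_MAPDA_general L K F Z S P hP g hg s f k hkinj hocc H hH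
end
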